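/- arXiv:2502.13634 — 2 statements merged into one kernel-verified Lean document; each statement's English description precedes it below -/
import Mathlib

section
/- For every real α > 2 and every K > 0, the improper integral ∫₀^∞ r (1 − exp(−K r^{-α})) dr converges and equals (K^{2/α}/2) · Γ(1 − 2/α), where Γ denotes the real Gamma function. -/
/-!
Write `u r = 1 - exp (-K * r ^ (-α))`. Integrating `r ^ (s - 1) * u r` by parts against
`d (r ^ s / s)` leaves `(K * α / s) ∫ r ^ (s - α - 1) * exp (-K * r ^ (-α)) dr`, which the
substitution `r ↦ r⁻¹` turns into Euler's integral for `Γ (1 - s / α)`. The boundary terms and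
the integrability at both ends come from `0 ≤ u r ≤ min 1 (K * r ^ (-α))`, which needs
`0 < s < α`; the theorem is the case `s = 2`.
-/

open MeasureTheory Real Set Filter Topology

section InverseGamma

variable {p q b : ℝ}

lemma rpow_mul_exp_neg_mul_rpow_comp_rpow_neg_one {x : ℝ} (hx : 0 < x) :
    (|(-1 : ℝ)| * x ^ ((-1 : ℝ) - 1)) • ((x ^ (-1 : ℝ)) ^ (-q - 2) * exp (-b * (x ^ (-1 : ℝ)) ^ p))
      = x ^ q * exp (-b * x ^ (-p)) := by
  rw [smul_eq_mul, abs_neg, abs_one, one_mul, ← rpow_mul hx.le, ← rpow_mul hx.le, ← mul_assoc,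
    ← rpow_add hx]
  ring_nf

theorem integrableOn_rpow_mul_exp_neg_mul_rpow_neg (hp : 0 < p) (hq : q < -1) (hb : 0 < b) :
    IntegrableOn (fun x : ℝ => x ^ q * exp (-b * x ^ (-p))) (Ioi 0) :=
  ((integrableOn_Ioi_comp_rpow_iff _ (by norm_num : (-1 : ℝ) ≠ 0)).2
    (integrableOn_rpow_mul_exp_neg_mul_rpow (by linarith) hp hb)).congr_fun
    (fun _ hx => rpow_mul_exp_neg_mul_rpow_comp_rpow_neg_one hx) measurableSet_Ioi

theorem integral_rpow_mul_exp_neg_mul_rpow_neg (hp : 0 < p) (hq : q < -1) (hb : 0 < b) :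
    ∫ x in Ioi (0 : ℝ), x ^ q * exp (-b * x ^ (-p)) =
      b ^ ((q + 1) / p) * (1 / p) * Gamma (-(q + 1) / p) := by
  rw [← setIntegral_congr_fun measurableSet_Ioi
      (fun _ hx => rpow_mul_exp_neg_mul_rpow_comp_rpow_neg_one (p := p) (q := q) (b := b) hx),
    integral_comp_rpow_Ioi (fun y => y ^ (-q - 2) * exp (-b * y ^ p)) (by norm_num : (-1 : ℝ) ≠ 0),
    integral_rpow_mul_exp_neg_mul_rpow hp (by linarith) hb]
  ring_nf

end InverseGamma

section RadialLaplace

variable {α K s : ℝ}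

lemma hasDerivAt_one_sub_exp_neg_mul_rpow_neg {r : ℝ} (hr : 0 < r) :
    HasDerivAt (fun r : ℝ => 1 - exp (-K * r ^ (-α)))
      (-(K * α) * (r ^ (-α - 1) * exp (-K * r ^ (-α)))) r := by
  refine ((((hasDerivAt_rpow_const (Or.inl hr.ne')).const_mul (-K)).exp).const_sub 1).congr_deriv ?_
  ring

lemma one_sub_exp_neg_mul_rpow_neg_nonneg (hK : 0 ≤ K) {r : ℝ} (hr : 0 ≤ r) :
    0 ≤ 1 - exp (-K * r ^ (-α)) := by
  have : -K * r ^ (-α) ≤ 0 := by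
    have := rpow_nonneg hr (-α)
    nlinarith
  linarith [exp_le_one_iff.2 this]

lemma one_sub_exp_neg_mul_rpow_neg_le_one (r : ℝ) : 1 - exp (-K * r ^ (-α)) ≤ 1 := by
  linarith [exp_pos (-K * r ^ (-α))]

lemma one_sub_exp_neg_mul_rpow_neg_le (r : ℝ) : 1 - exp (-K * r ^ (-α)) ≤ K * r ^ (-α) := by
  linarith [neg_mul K (r ^ (-α)) ▸ one_sub_le_exp_neg (K * r ^ (-α))]

lemma tendsto_one_sub_exp_neg_mul_rpow_neg_mul_rpow_nhdsGT_zero (hK : 0 ≤ K) (hs : 0 < s) :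
    Tendsto (fun r : ℝ => (1 - exp (-K * r ^ (-α))) * (r ^ s / s)) (𝓝[>] 0) (𝓝 0) := by
  have hbound : Tendsto (fun r : ℝ => r ^ s / s) (𝓝[>] 0) (𝓝 0) := by
    have := ((continuousAt_rpow_const 0 s (Or.inr hs.le)).tendsto.div_const s).mono_left
      (nhdsWithin_le_nhds (s := Ioi 0))
    rwa [zero_rpow hs.ne', zero_div] at this
  refine squeeze_zero' ?_ ?_ hbound
  all_goals filter_upwards [self_mem_nhdsWithin] with r (hr : 0 < r)
  · exact mul_nonneg (one_sub_exp_neg_mul_rpow_neg_nonneg hK hr.le) (by positivity)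
  · exact mul_le_of_le_one_left (by positivity) (one_sub_exp_neg_mul_rpow_neg_le_one r)

lemma tendsto_one_sub_exp_neg_mul_rpow_neg_mul_rpow_atTop (hK : 0 ≤ K) (hs : 0 < s)
    (hsα : s < α) :
    Tendsto (fun r : ℝ => (1 - exp (-K * r ^ (-α))) * (r ^ s / s)) atTop (𝓝 0) := by
  have hbound : Tendsto (fun r : ℝ => K / s * r ^ (-(α - s))) atTop (𝓝 0) := by
    simpa using (tendsto_rpow_neg_atTop (sub_pos.2 hsα)).const_mul (K / s)
  refine squeeze_zero' ?_ ?_ hbound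
  all_goals filter_upwards [eventually_gt_atTop 0] with r hr
  · exact mul_nonneg (one_sub_exp_neg_mul_rpow_neg_nonneg hK hr.le) (by positivity)
  · calc (1 - exp (-K * r ^ (-α))) * (r ^ s / s) ≤ K * r ^ (-α) * (r ^ s / s) :=
          mul_le_mul_of_nonneg_right (one_sub_exp_neg_mul_rpow_neg_le r) (by positivity)
      _ = K / s * r ^ (-(α - s)) := by
          rw [neg_sub, sub_eq_neg_add, rpow_add hr]
          ring

theorem integrableOn_rpow_sub_one_mul_one_sub_exp_neg_mul_rpow_neg (hK : 0 ≤ K) (hs : 0 < s)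
    (hsα : s < α) :
    IntegrableOn (fun r : ℝ => r ^ (s - 1) * (1 - exp (-K * r ^ (-α)))) (Ioi 0) := by
  have hmeas : AEStronglyMeasurable (fun r : ℝ => r ^ (s - 1) * (1 - exp (-K * r ^ (-α))))
      (volume.restrict (Ioi 0)) := by
    refine ContinuousOn.aestronglyMeasurable (fun r (hr : 0 < r) => ?_) measurableSet_Ioi
    exact ((continuousAt_rpow_const r _ (Or.inl hr.ne')).mul
      (hasDerivAt_one_sub_exp_neg_mul_rpow_neg hr).continuousAt).continuousWithinAt
  rw [← Ioc_union_Ioi_eq_Ioi zero_le_one]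
  refine IntegrableOn.union ?_ ?_
  · refine Integrable.mono' ((intervalIntegrable_iff_integrableOn_Ioc_of_le zero_le_one).1
      (intervalIntegral.intervalIntegrable_rpow' (r := s - 1) (by linarith)))
      (hmeas.mono_set Ioc_subset_Ioi_self) ?_
    refine (ae_restrict_iff' measurableSet_Ioc).2 (.of_forall fun r ⟨hr, _⟩ => ?_)
    rw [norm_of_nonneg (mul_nonneg (by positivity) (one_sub_exp_neg_mul_rpow_neg_nonneg hK hr.le))]
    exact mul_le_of_le_one_right (by positivity) (one_sub_exp_neg_mul_rpow_neg_le_one r)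
  · refine Integrable.mono' ((integrableOn_Ioi_rpow_of_lt (by linarith : s - 1 - α < -1)
      zero_lt_one).const_mul K) (hmeas.mono_set (Ioi_subset_Ioi zero_le_one)) ?_
    refine (ae_restrict_iff' measurableSet_Ioi).2 (.of_forall fun r (hr : 1 < r) => ?_)
    have hr0 : 0 < r := zero_lt_one.trans hr
    rw [norm_of_nonneg (mul_nonneg (by positivity) (one_sub_exp_neg_mul_rpow_neg_nonneg hK hr0.le))]
    calc r ^ (s - 1) * (1 - exp (-K * r ^ (-α))) ≤ r ^ (s - 1) * (K * r ^ (-α)) :=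
          mul_le_mul_of_nonneg_left (one_sub_exp_neg_mul_rpow_neg_le r) (by positivity)
      _ = K * r ^ (s - 1 - α) := by
          rw [sub_eq_add_neg (s - 1) α, rpow_add hr0]
          ring

theorem integral_rpow_sub_one_mul_one_sub_exp_neg_mul_rpow_neg (hK : 0 < K) (hs : 0 < s)
    (hsα : s < α) :
    ∫ r in Ioi (0 : ℝ), r ^ (s - 1) * (1 - exp (-K * r ^ (-α))) =
      K ^ (s / α) / s * Gamma (1 - s / α) := by
  have hα : 0 < α := hs.trans hsα
  have hv : ∀ r ∈ Ioi (0 : ℝ), HasDerivAt (fun r : ℝ => r ^ s / s) (r ^ (s - 1)) r := fun r hr => by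
    refine ((hasDerivAt_rpow_const (Or.inl (ne_of_gt hr))).div_const s).congr_deriv ?_
    field_simp
  have hu'v : ∀ r ∈ Ioi (0 : ℝ),
      -(K * α) * (r ^ (-α - 1) * exp (-K * r ^ (-α))) * (r ^ s / s) =
        -(K * α / s) * (r ^ (s - α - 1) * exp (-K * r ^ (-α))) := fun r (hr : 0 < r) => by
    rw [show s - α - 1 = -α - 1 + s by ring, rpow_add hr]
    ring
  have hq : s - α - 1 < -1 := by linarith
  have hibp := integral_Ioi_mul_deriv_eq_deriv_mul
    (fun r hr => hasDerivAt_one_sub_exp_neg_mul_rpow_neg (K := K) (α := α) hr) hv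
    ((integrableOn_rpow_sub_one_mul_one_sub_exp_neg_mul_rpow_neg hK.le hs hsα).congr_fun
      (fun _ _ => mul_comm _ _) measurableSet_Ioi)
    (IntegrableOn.congr_fun ((integrableOn_rpow_mul_exp_neg_mul_rpow_neg hα hq hK).const_mul _)
      (fun r hr => (hu'v r hr).symm) measurableSet_Ioi)
    (tendsto_one_sub_exp_neg_mul_rpow_neg_mul_rpow_nhdsGT_zero hK.le hs)
    (tendsto_one_sub_exp_neg_mul_rpow_neg_mul_rpow_atTop hK.le hs hsα)
  rw [setIntegral_congr_fun measurableSet_Ioi hu'v, integral_const_mul,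
    integral_rpow_mul_exp_neg_mul_rpow_neg hα hq hK] at hibp
  rw [setIntegral_congr_fun measurableSet_Ioi (fun r _ => mul_comm _ _), hibp,
    show (s - α - 1 + 1) / α = s / α - 1 by field_simp; ring,
    show -(s - α - 1 + 1) / α = 1 - s / α by field_simp; ring, rpow_sub_one hK.ne']
  field_simp
  ring

end RadialLaplace

/-- For `α > 2` and `K > 0`, `∫₀^∞ r (1 − exp(−K r^{-α})) dr` converges and equals
`(K^{2/α}/2) · Γ(1 − 2/α)`. -/
theorem integral_radial_laplace (α K : ℝ) (hα : 2 < α) (hK : 0 < K) :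
    IntegrableOn (fun r : ℝ => r * (1 - Real.exp (-K * r ^ (-α)))) (Ioi 0) ∧
    ∫ r in Ioi (0 : ℝ), r * (1 - Real.exp (-K * r ^ (-α)))
      = K ^ (2 / α) / 2 * Real.Gamma (1 - 2 / α) := by
  have hr : ∀ r : ℝ, r ^ ((2 : ℝ) - 1) = r := fun r => by norm_num
  constructor
  · simpa only [hr] using
      integrableOn_rpow_sub_one_mul_one_sub_exp_neg_mul_rpow_neg hK.le two_pos hα
  · simpa only [hr] using integral_rpow_sub_one_mul_one_sub_exp_neg_mul_rpow_neg hK two_pos hα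
end

section
/- For every real α > 2 and every c > 0, the improper integral ∫₀^∞ r (1 − 1/(1 + c r^{-α})) dr converges and equals (c^{2/α}/2) · Γ(1 + 2/α) · Γ(1 − 2/α), where Γ denotes the real Gamma function. -/
open MeasureTheory Real Set

private lemma int_exp_Ioi_aux {b : ℝ} (hb : 0 < b) :
    ∫ t in Ioi (0:ℝ), Real.exp (-(b * t)) = 1 / b := by
  have h := Real.integral_rpow_mul_exp_neg_mul_Ioi (a := 1) one_pos hb
  simpa using h

private lemma sect_int_aux {α c : ℝ} (hc : 0 < c) {r : ℝ} (hr0 : 0 < r) :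
    ∫ t in Ioi (0:ℝ), c * r * Real.exp (-((r ^ α + c) * t)) = c * r / (r ^ α + c) := by
  have hb : (0:ℝ) < r ^ α + c := by positivity
  rw [MeasureTheory.integral_const_mul, int_exp_Ioi_aux hb, mul_one_div]

private lemma g_integrable_aux {α c : ℝ} (hα : 2 < α) (hc : 0 < c) :
    IntegrableOn (fun r : ℝ => c * r / (r ^ α + c)) (Ioi 0) := by
  have hmeas : Measurable (fun r : ℝ => c * r / (r ^ α + c)) := by fun_prop
  have hsplit : Ioi (0:ℝ) = Ioc 0 1 ∪ Ioi 1 := (Ioc_union_Ioi_eq_Ioi zero_le_one).symm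
  rw [hsplit]
  apply IntegrableOn.union
  · apply Measure.integrableOn_of_bounded (M := 1) measure_Ioc_lt_top.ne
      hmeas.aestronglyMeasurable
    filter_upwards [ae_restrict_mem measurableSet_Ioc] with r hr
    have hr0 : (0:ℝ) < r := hr.1
    have h1 : (0:ℝ) < r ^ α := rpow_pos_of_pos hr0 α
    have hle : c * r / (r ^ α + c) ≤ r := by
      rw [div_le_iff₀ (by positivity)]
      nlinarith
    have hge : 0 ≤ c * r / (r ^ α + c) := by positivity
    rw [Real.norm_eq_abs, abs_of_nonneg hge]
    exact hle.trans hr.2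
  · have hint : IntegrableOn (fun r : ℝ => c * r ^ (1 - α)) (Ioi 1) :=
      (integrableOn_Ioi_rpow_of_lt (by linarith) one_pos).const_mul c
    apply hint.mono' hmeas.aestronglyMeasurable
    filter_upwards [ae_restrict_mem measurableSet_Ioi] with r hr
    have hr0 : (0:ℝ) < r := lt_trans one_pos hr
    have h1 : (0:ℝ) < r ^ α := rpow_pos_of_pos hr0 α
    have hge : 0 ≤ c * r / (r ^ α + c) := by positivity
    rw [Real.norm_eq_abs, abs_of_nonneg hge]
    have key : c * r / (r ^ α + c) ≤ c * r / r ^ α :=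
      div_le_div_of_nonneg_left (by positivity) h1 (by linarith)
    have h2 : c * r ^ (1 - α) = c * r / r ^ α := by
      rw [rpow_sub hr0, rpow_one, mul_div_assoc]
    rw [h2]
    exact key

private lemma F_integrable_aux {α c : ℝ} (hα : 2 < α) (hc : 0 < c) :
    Integrable (Function.uncurry fun r t : ℝ => c * r * Real.exp (-((r ^ α + c) * t)))
      ((volume.restrict (Ioi 0)).prod (volume.restrict (Ioi 0))) := by
  have hg_int := g_integrable_aux hα hc
  have hmeas : AEStronglyMeasurable
      (Function.uncurry fun r t : ℝ => c * r * Real.exp (-((r ^ α + c) * t)))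
      ((volume.restrict (Ioi 0)).prod (volume.restrict (Ioi 0))) := by
    apply Measurable.aestronglyMeasurable; fun_prop
  rw [integrable_prod_iff hmeas]
  simp only [Function.uncurry]
  constructor
  · filter_upwards [ae_restrict_mem measurableSet_Ioi] with r hr
    have hr0 : (0:ℝ) < r := hr
    have hb : (0:ℝ) < r ^ α + c := by positivity
    have h2 : (fun t : ℝ => c * r * Real.exp (-((r ^ α + c) * t)))
        = fun t => c * r * Real.exp (-(r ^ α + c) * t) := by
      ext t; rw [neg_mul]
    rw [h2]
    exact (exp_neg_integrableOn_Ioi 0 hb).const_mul _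
  · apply hg_int.congr
    filter_upwards [ae_restrict_mem measurableSet_Ioi] with r hr
    have hr0 : (0:ℝ) < r := hr
    rw [← sect_int_aux hc hr0]
    refine setIntegral_congr_fun measurableSet_Ioi (fun t ht => ?_) |>.symm
    rw [Real.norm_eq_abs,
      abs_of_nonneg (mul_nonneg (mul_nonneg hc.le hr0.le) (Real.exp_nonneg _))]

/-- For `α > 2` and `c > 0`, `∫₀^∞ r (1 − 1/(1 + c r^{-α})) dr` converges and equals
`(c^{2/α}/2) · Γ(1 + 2/α) · Γ(1 − 2/α)`. -/
theorem integral_radial_fading_laplace (α c : ℝ) (hα : 2 < α) (hc : 0 < c) :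
    IntegrableOn (fun r : ℝ => r * (1 - 1 / (1 + c * r ^ (-α)))) (Ioi 0) ∧
    ∫ r in Ioi (0 : ℝ), r * (1 - 1 / (1 + c * r ^ (-α)))
      = c ^ (2 / α) / 2 * (Real.Gamma (1 + 2 / α) * Real.Gamma (1 - 2 / α)) := by
  have hα0 : (0:ℝ) < α := by linarith
  have heq : EqOn (fun r : ℝ => r * (1 - 1 / (1 + c * r ^ (-α))))
      (fun r : ℝ => c * r / (r ^ α + c)) (Ioi 0) := by
    intro r hr
    have hr0 : (0:ℝ) < r := hr
    have h1 : (0:ℝ) < r ^ α := rpow_pos_of_pos hr0 α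
    have h2 : r ^ (-α) = (r ^ α)⁻¹ := rpow_neg hr0.le α
    have h3 : r ^ α + c ≠ 0 := by positivity
    have h4 : (1:ℝ) + c * (r ^ α)⁻¹ ≠ 0 := by positivity
    simp only [h2]
    field_simp
    ring
  have hg_int := g_integrable_aux hα hc
  constructor
  · exact (integrableOn_congr_fun heq measurableSet_Ioi).mpr hg_int
  · rw [setIntegral_congr_fun measurableSet_Ioi heq]
    -- Fubini
    have hswap := MeasureTheory.integral_integral_swap (F_integrable_aux hα hc)
    have hL : (∫ r in Ioi (0:ℝ), ∫ t in Ioi (0:ℝ), c * r * Real.exp (-((r ^ α + c) * t)))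
        = ∫ r in Ioi (0:ℝ), c * r / (r ^ α + c) := by
      refine setIntegral_congr_fun measurableSet_Ioi (fun r hr => ?_)
      exact sect_int_aux hc hr
    have h2α : (0:ℝ) < 2 / α := by positivity
    have h2α1 : 2 / α < 1 := by
      rw [div_lt_one hα0]; linarith
    have hR : (∫ t in Ioi (0:ℝ), ∫ r in Ioi (0:ℝ), c * r * Real.exp (-((r ^ α + c) * t)))
        = (c * ((1:ℝ)/α) * Real.Gamma (2/α)) * ((1/c) ^ (1 - 2/α) * Real.Gamma (1 - 2/α)) := by
      have hinner : ∀ t ∈ Ioi (0:ℝ),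
          (∫ r in Ioi (0:ℝ), c * r * Real.exp (-((r ^ α + c) * t)))
          = (c * ((1:ℝ)/α) * Real.Gamma (2/α)) * (t ^ ((1 - 2/α) - 1) * Real.exp (-(c * t))) := by
        intro t ht
        have ht0 : (0:ℝ) < t := ht
        have hsplit : ∀ r : ℝ, c * r * Real.exp (-((r ^ α + c) * t))
            = (c * Real.exp (-(c * t))) * (r ^ (1:ℝ) * Real.exp (-t * r ^ α)) := by
          intro r
          rw [rpow_one]
          rw [show -((r ^ α + c) * t) = (-(c * t)) + (-t * r ^ α) by ring, Real.exp_add]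
          ring
        simp_rw [hsplit]
        rw [MeasureTheory.integral_const_mul,
          integral_rpow_mul_exp_neg_mul_rpow hα0 (by norm_num) ht0]
        rw [show ((1:ℝ) + 1) = 2 by norm_num]
        rw [show (1:ℝ) - 2/α - 1 = -2/α by ring]
        ring
      rw [setIntegral_congr_fun measurableSet_Ioi hinner,
        MeasureTheory.integral_const_mul,
        Real.integral_rpow_mul_exp_neg_mul_Ioi (by linarith : (0:ℝ) < 1 - 2/α) hc]
    rw [hswap] at hL
    rw [← hL, hR]
    -- final algebra
    have hgam : Real.Gamma (1 + 2/α) = (2/α) * Real.Gamma (2/α) := by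
      rw [add_comm, Real.Gamma_add_one (ne_of_gt h2α)]
    rw [hgam]
    have hc1 : ((1:ℝ)/c) ^ (1 - 2/α) = c ^ (2/α - 1) := by
      rw [one_div, Real.inv_rpow hc.le, ← Real.rpow_neg hc.le]
      congr 1; ring
    rw [hc1]
    have hc2 : c * c ^ (2/α - 1) = c ^ (2/α) := by
      nth_rewrite 1 [← Real.rpow_one c]
      rw [← Real.rpow_add hc]; congr 1; ring
    have hre : c * ((1:ℝ)/α) * Real.Gamma (2/α) * (c ^ (2/α - 1) * Real.Gamma (1 - 2/α))
        = (c * c ^ (2/α - 1)) * (((1:ℝ)/α) * Real.Gamma (2/α) * Real.Gamma (1 - 2/α)) := by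
      ring
    rw [hre, hc2]
    ring
end
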